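/- Fix m ∈ ℕ and define recursively T_1 := κ_m and, for j ≥ 1, T_{j+1} := κ_{T_j + 1} on the event {T_j < ∞} and T_{j+1} := ∞ otherwise. Then for every k ≥ 1, ℙ(T_k < ∞) ≤ ℙ(κ_0 < ∞)^k. -/

import Mathlib

open MeasureTheory ProbabilityTheory Set Filter Function
open scoped ENNReal

/-! Applying hypothesis (iii) to `g = 1` shows that `{κ (n + 1) < ∞}` is independent of `ℱ n` and
has probability `p = ℙ(κ 0 < ∞)`. The times `T k` are stopping times, so splitting
`{T (k + 1) < ∞}` according to the value `s` of `T k` gives pieces `{T k = s} ∩ {κ (s + 1) < ∞}`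
of probability `ℙ(T k = s) * p`; summing over `s`, `ℙ(T (k + 1) < ∞) = ℙ(T k < ∞) * p`. -/

section Independence

variable {Ω : Type*} {m mΩ : MeasurableSpace Ω} {μ : Measure Ω}

theorem measure_inter_eq_mul_of_condExp_indicator_ae_eq [IsFiniteMeasure μ]
    (hm : m ≤ mΩ) {s t : Set Ω} (hs : MeasurableSet s)
    (hc : μ[s.indicator (fun _ => (1 : ℝ)) | m] =ᵐ[μ] fun _ => μ.real t)
    {A : Set Ω} (hA : MeasurableSet[m] A) :
    μ (A ∩ s) = μ A * μ t := by
  refine (ENNReal.toReal_eq_toReal_iff' (by finiteness) (by finiteness)).1 ?_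
  rw [ENNReal.toReal_mul]
  change μ.real (A ∩ s) = μ.real A * μ.real t
  calc μ.real (A ∩ s) = ∫ ω in A, s.indicator (fun _ => (1 : ℝ)) ω ∂μ := by
        rw [integral_indicator_const _ hs, measureReal_restrict_apply hs, smul_eq_mul, mul_one,
          inter_comm]
    _ = ∫ ω in A, μ[s.indicator (fun _ => (1 : ℝ)) | m] ω ∂μ :=
        (setIntegral_condExp hm ((integrable_const 1).indicator hs) hA).symm
    _ = ∫ _ in A, μ.real t ∂μ := setIntegral_congr_ae (hm A hA) (hc.mono fun ω hω _ => hω)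
    _ = μ.real A * μ.real t := by rw [setIntegral_const, smul_eq_mul]

theorem measure_inter_compl_eq_mul_compl [IsProbabilityMeasure μ] {A s t : Set Ω}
    (hs : MeasurableSet s) (ht : MeasurableSet t) (h : μ (A ∩ s) = μ A * μ t) :
    μ (A ∩ sᶜ) = μ A * μ tᶜ := by
  refine (ENNReal.add_left_inj (a := μ (A ∩ s)) (by finiteness)).mp ?_
  rw [← sdiff_eq, measure_sdiff_add_inter _ hs, h, ← mul_add, add_comm (μ tᶜ),
    measure_add_measure_compl ht, measure_univ, mul_one]

end Independence

section Renewal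

variable {Ω : Type*} {mΩ : MeasurableSpace Ω}

def nextRenewal (κ : ℕ → Ω → ℕ∞) (τ : Ω → ℕ∞) (ω : Ω) : ℕ∞ :=
  if τ ω = ⊤ then ⊤ else κ ((τ ω).toNat + 1) ω

theorem nextRenewal_lt_top_iff {κ : ℕ → Ω → ℕ∞} {τ : Ω → ℕ∞} {ω : Ω} :
    nextRenewal κ τ ω < ⊤ ↔ ∃ s : ℕ, τ ω = s ∧ κ (s + 1) ω < ⊤ := by
  unfold nextRenewal
  split_ifs with h
  · simp [h]
  · lift τ ω to ℕ using h with s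
    simp

theorem nextRenewal_eq_natCast_iff {κ : ℕ → Ω → ℕ∞} {τ : Ω → ℕ∞} {ω : Ω} {t : ℕ} :
    nextRenewal κ τ ω = t ↔ ∃ s : ℕ, τ ω = s ∧ κ (s + 1) ω = t := by
  unfold nextRenewal
  split_ifs with h
  · simp [h]
  · lift τ ω to ℕ using h with s
    simp

variable {ℱ : Filtration ℕ mΩ} {κ : ℕ → Ω → ℕ∞} {τ : Ω → ℕ∞}

theorem IsStoppingTime.nextRenewal (hτ : IsStoppingTime ℱ τ) (hκ : ∀ n, IsStoppingTime ℱ (κ n))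
    (hκ_ge : ∀ (n : ℕ) ω, (n : ℕ∞) ≤ κ n ω) : IsStoppingTime ℱ (_root_.nextRenewal κ τ) := by
  refine isStoppingTime_of_measurableSet_eq fun t => ?_
  have : {ω | _root_.nextRenewal κ τ ω = t} = ⋃ s < t, {ω | τ ω = s} ∩ {ω | κ (s + 1) ω = t} := by
    ext ω
    simp only [mem_ofPred_eq, nextRenewal_eq_natCast_iff, mem_iUnion, mem_inter_iff, exists_prop]
    refine exists_congr fun s => ⟨fun h => ⟨?_, h⟩, fun h => h.2⟩
    have := h.2 ▸ hκ_ge (s + 1) ω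
    exact_mod_cast this
  -- `IsStoppingTime` casts `t` by `WithTop.some`, not by `Nat.cast`
  change MeasurableSet[ℱ t] {ω | _ = (t : ℕ∞)}
  rw [this]
  exact .biUnion (to_countable _) fun s hs =>
    (ℱ.mono (Nat.le_of_lt hs) _ (hτ.measurableSet_eq s)).inter ((hκ (s + 1)).measurableSet_eq t)

theorem measure_nextRenewal_lt_top {μ : Measure Ω} (hτ : IsStoppingTime ℱ τ)
    (hκ : ∀ n, IsStoppingTime ℱ (κ n)) {p : ℝ≥0∞}
    (hκ_indep : ∀ n A, MeasurableSet[ℱ n] A → μ (A ∩ {ω | κ (n + 1) ω < ⊤}) = μ A * p) :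
    μ {ω | nextRenewal κ τ ω < ⊤} = μ {ω | τ ω < ⊤} * p := by
  have hκ_meas (n : ℕ) : MeasurableSet {ω | κ n ω < ⊤} := by
    have htop : MeasurableSet {ω | κ n ω = ⊤} := (hκ n).measurableSet_eq_top
    simpa only [compl_ofPred, lt_top_iff_ne_top] using htop.compl
  have hlevel (s : ℕ) : MeasurableSet {ω | τ ω = s} := ℱ.le s _ (hτ.measurableSet_eq s)
  have hdisj : Pairwise (Disjoint on fun s : ℕ => {ω | τ ω = s}) := fun a b hab =>
    disjoint_left.2 fun ω ha hb => hab (by exact_mod_cast ha.symm.trans hb)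
  have hsplit : {ω | nextRenewal κ τ ω < ⊤}
      = ⋃ s : ℕ, {ω | τ ω = s} ∩ {ω | κ (s + 1) ω < ⊤} := by
    ext ω
    simp [nextRenewal_lt_top_iff]
  have hτ_lt : {ω | τ ω < ⊤} = ⋃ s : ℕ, {ω | τ ω = s} := by
    ext ω
    simp only [mem_ofPred_eq, mem_iUnion]
    induction τ ω using ENat.recTopCoe <;> simp
  rw [hsplit, hτ_lt, measure_iUnion (hdisj.mono fun _ _ => .mono inter_subset_left inter_subset_left)
    fun s => (hlevel s).inter (hκ_meas _), measure_iUnion hdisj hlevel, ← ENNReal.tsum_mul_right]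
  exact tsum_congr fun s => hκ_indep s _ (hτ.measurableSet_eq s)

end Renewal

theorem renewal_iterated_stopping_bound_general
    {Ω E : Type*} {mΩ : MeasurableSpace Ω} [MeasurableSpace E]
    (μ : Measure Ω) [IsProbabilityMeasure μ]
    (ℱ : Filtration ℕ mΩ)
    (κ : ℕ → Ω → ℕ∞) (Y : ℕ → Ω → E)
    (hκ_stop : ∀ i n : ℕ, MeasurableSet[ℱ n] {ω | κ i ω ≤ (n : ℕ∞)})
    (h_i : ∀ (n : ℕ) (ω : Ω), (n : ℕ∞) ≤ κ n ω)
    (h_iii : ∀ g : (ℕ → E × ℕ∞) → ℝ, Measurable g → (∃ Cg : ℝ, ∀ x, |g x| ≤ Cg) →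
      ∀ n : ℕ, 1 ≤ n →
      μ[fun ω => g (fun k => (Y (n + k) ω, κ (n + k) ω - ((n + k : ℕ) : ℕ∞)))
            * ({ω' | κ n ω' = ⊤}.indicator (fun _ => (1 : ℝ)) ω) | ℱ (n - 1)]
        =ᵐ[μ] fun _ => ∫ ω, g (fun k => (Y k ω, κ k ω - ((k : ℕ) : ℕ∞)))
            * ({ω' | κ 0 ω' = ⊤}.indicator (fun _ => (1 : ℝ)) ω) ∂μ)
    (m : ℕ) (T : ℕ → Ω → ℕ∞)
    (hT1 : ∀ ω, T 1 ω = κ m ω)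
    (hTrec : ∀ j : ℕ, 1 ≤ j → ∀ ω,
      T (j + 1) ω = if T j ω = ⊤ then ⊤ else κ ((T j ω).toNat + 1) ω) :
    ∀ k : ℕ, 1 ≤ k → μ {ω | T k ω < ⊤} ≤ μ {ω | κ 0 ω < ⊤} ^ k := by
  have hκ (i : ℕ) : IsStoppingTime ℱ (κ i) := fun n => hκ_stop i n
  have hκ_top (i : ℕ) : MeasurableSet {ω | κ i ω = ⊤} := (hκ i).measurableSet_eq_top
  have hκ_indep (n : ℕ) (A : Set Ω) (hA : MeasurableSet[ℱ n] A) :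
      μ (A ∩ {ω | κ (n + 1) ω < ⊤}) = μ A * μ {ω | κ 0 ω < ⊤} := by
    have hcond := h_iii (fun _ => 1) measurable_const ⟨1, fun _ => by simp⟩ (n + 1) n.succ_pos
    simp only [one_mul, integral_indicator_const _ (hκ_top 0), smul_eq_mul, mul_one,
      Nat.add_sub_cancel] at hcond
    have := measure_inter_compl_eq_mul_compl (hκ_top (n + 1)) (hκ_top 0)
      (measure_inter_eq_mul_of_condExp_indicator_ae_eq (ℱ.le n) (hκ_top _) hcond hA)
    simpa only [compl_ofPred, ← lt_top_iff_ne_top] using this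
  have hT_next (k : ℕ) (hk : 1 ≤ k) : T (k + 1) = nextRenewal κ (T k) := funext (hTrec k hk)
  have hT_stop (k : ℕ) (hk : 1 ≤ k) : IsStoppingTime ℱ (T k) := by
    induction k, hk using Nat.le_induction with
    | base => exact funext hT1 ▸ hκ m
    | succ k hk ih => exact hT_next k hk ▸ IsStoppingTime.nextRenewal ih hκ h_i
  intro k hk
  induction k, hk using Nat.le_induction with
  | base =>
    simp only [hT1, pow_one]
    cases m with
    | zero => exact le_rfl
    | succ n => simpa using (hκ_indep n univ .univ).le
  | succ k hk ih =>
    rw [hT_next k hk, measure_nextRenewal_lt_top (hT_stop k hk) hκ hκ_indep, pow_succ]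
    gcongr

/-- Fix `m` and define recursively `T 1 := κ m` and, for `j ≥ 1`,
`T (j+1) := κ (T j + 1)` on the event `{T j < ∞}` and `T (j+1) := ∞` otherwise.
Then for every `k ≥ 1`, `ℙ(T k < ∞) ≤ ℙ(κ 0 < ∞) ^ k`. -/
theorem renewal_iterated_stopping_bound
    {Ω E : Type*} {mΩ : MeasurableSpace Ω} [MeasurableSpace E]
    (μ : Measure Ω) [IsProbabilityMeasure μ]
    (ℱ : Filtration ℕ mΩ)
    (κ : ℕ → Ω → ℕ∞) (Y : ℕ → Ω → E)
    (hκ_stop : ∀ i n : ℕ, MeasurableSet[ℱ n] {ω | κ i ω ≤ (n : ℕ∞)})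
    (hY_adapted : ∀ n : ℕ, Measurable[ℱ n] (Y n))
    (h_i : ∀ (n : ℕ) (ω : Ω), (n : ℕ∞) ≤ κ n ω)
    (h_ii : ∀ (m n : ℕ) (ω : Ω), m < n → (n : ℕ∞) ≤ κ m ω → κ n ω ≤ κ m ω)
    (h_iii : ∀ g : (ℕ → E × ℕ∞) → ℝ, Measurable g → (∃ Cg : ℝ, ∀ x, |g x| ≤ Cg) →
      ∀ n : ℕ, 1 ≤ n →
      μ[fun ω => g (fun k => (Y (n + k) ω, κ (n + k) ω - ((n + k : ℕ) : ℕ∞)))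
            * ({ω' | κ n ω' = ⊤}.indicator (fun _ => (1 : ℝ)) ω) | ℱ (n - 1)]
        =ᵐ[μ] fun _ => ∫ ω, g (fun k => (Y k ω, κ k ω - ((k : ℕ) : ℕ∞)))
            * ({ω' | κ 0 ω' = ⊤}.indicator (fun _ => (1 : ℝ)) ω) ∂μ)
    (h_iv : 0 < μ {ω | κ 0 ω = ⊤})
    (m : ℕ) (T : ℕ → Ω → ℕ∞)
    (hT1 : ∀ ω, T 1 ω = κ m ω)
    (hTrec : ∀ j : ℕ, 1 ≤ j → ∀ ω,
      T (j + 1) ω = if T j ω = ⊤ then ⊤ else κ ((T j ω).toNat + 1) ω) :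
    ∀ k : ℕ, 1 ≤ k → μ {ω | T k ω < ⊤} ≤ μ {ω | κ 0 ω < ⊤} ^ k :=
  renewal_iterated_stopping_bound_general μ ℱ κ Y hκ_stop h_i h_iii m T hT1 hTrec
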